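/- arXiv:1110.5867 — 7 statements merged into one kernel-verified Lean document; each statement's English description precedes it below -/
import Mathlib

section
/- If a CNF formula α has a decision-tree (DLL) refutation of size k, then α has a tree-like resolution refutation of size at most k. -/
/-- A variable is a natural number. -/
abbrev Var : Type := ℕ

/-- A literal is a pair of a variable and a Boolean. -/
abbrev Lit : Type := Var × Bool

/-- A clause is a finite set of literals. -/
abbrev Clause : Type := Finset Lit

/-- A CNF formula is a finite set of clauses. -/
abbrev CNF : Type := Finset Clause

/-- A partial assignment. -/
abbrev PAssign : Type := Var → Option Bool

/-- A clause is falsified by a partial assignment if all its literals are false under it. -/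
def Falsified (ρ : PAssign) (C : Clause) : Prop :=
  ∀ l ∈ C, ρ l.1 = some (!l.2)

/-- Extend a partial assignment by `v := b`. -/
def extendP (ρ : PAssign) (v : Var) (b : Bool) : PAssign :=
  fun w => if w = v then some b else ρ w

/-- Binary decision trees: leaves labeled by clauses, internal nodes labeled by a
variable, with `t0` the `v := false` child and `t1` the `v := true` child. -/
inductive DTree : Type where
  | leaf (C : Clause)
  | node (v : Var) (t0 t1 : DTree)

/-- Size of a decision tree: the number of internal nodes (decisions). -/
def DTree.size : DTree → ℕ
  | .leaf _ => 0
  | .node _ t0 t1 => t0.size + t1.size + 1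

/-- Correctness of a decision-tree (DLL) refutation of `α`, relative to the partial
assignment `ρ` accumulated along the path from the root: no variable occurs twice on
a path, and every leaf is labeled by a clause of `α` falsified by its path assignment. -/
def DLLOk (α : CNF) : PAssign → DTree → Prop
  | ρ, .leaf C => C ∈ α ∧ Falsified ρ C
  | ρ, .node v t0 t1 =>
      ρ v = none ∧ DLLOk α (extendP ρ v false) t0 ∧ DLLOk α (extendP ρ v true) t1

/-- A decision-tree (DLL) refutation of `α`. -/
def IsDLLRefutation (α : CNF) (t : DTree) : Prop :=
  DLLOk α (fun _ => none) t

/-- Resolution trees: leaves labeled by clauses, internal nodes labeled by a clause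
and a pivot variable, `t1` being the child whose clause contains `(v, true)` and
`t2` the child whose clause contains `(v, false)`. -/
inductive RTree : Type where
  | leaf (C : Clause)
  | node (C : Clause) (v : Var) (t1 t2 : RTree)

/-- The clause labeling the root of a resolution tree. -/
def RTree.clause : RTree → Clause
  | .leaf C => C
  | .node C _ _ _ => C

/-- Size of a resolution tree: the number of internal nodes. -/
def RTree.size : RTree → ℕ
  | .leaf _ => 0
  | .node _ _ t1 t2 => t1.size + t2.size + 1

/-- Correctness of a tree-like resolution derivation from `α`: every leaf is a clause
of `α` and every internal node is the resolvent of its two children on its pivot. -/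
def ResOk (α : CNF) : RTree → Prop
  | .leaf C => C ∈ α
  | .node C v t1 t2 =>
      ResOk α t1 ∧ ResOk α t2 ∧
      (v, true) ∈ t1.clause ∧ (v, false) ∈ t2.clause ∧
      C = t1.clause.erase (v, true) ∪ t2.clause.erase (v, false)

/-- A tree-like resolution refutation of `α`: a correct derivation of the empty clause. -/
def IsTLRRefutation (α : CNF) (t : RTree) : Prop :=
  ResOk α t ∧ t.clause = ∅

/-- A total assignment satisfies a CNF formula if every clause contains a true literal. -/
def Satisfies (τ : Var → Bool) (α : CNF) : Prop :=
  ∀ C ∈ α, ∃ l ∈ C, τ l.1 = l.2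

/-- A CNF formula is unsatisfiable if no total assignment satisfies it. -/
def Unsat (α : CNF) : Prop :=
  ∀ τ : Var → Bool, ¬ Satisfies τ α

/-- Every root-to-leaf path of the tree assigns every variable of `V`. -/
def AssignsAll (V : Finset Var) : PAssign → DTree → Prop
  | ρ, .leaf _ => ∀ v ∈ V, ρ v ≠ none
  | ρ, .node v t0 t1 =>
      AssignsAll V (extendP ρ v false) t0 ∧ AssignsAll V (extendP ρ v true) t1

/-- A total-enumeration (TAE) refutation of `α` over `V`: a decision-tree refutation
in which every root-to-leaf path assigns every variable of `V`. -/
def IsTAERefutation (α : CNF) (V : Finset Var) (t : DTree) : Prop :=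
  IsDLLRefutation α t ∧ AssignsAll V (fun _ => none) t

/-- `C` is a unit clause under `ρ` with unassigned literal `(v, b)`: exactly one
literal of `C` is unassigned and all other literals of `C` are false under `ρ`. -/
def UnitClause (ρ : PAssign) (C : Clause) (v : Var) (b : Bool) : Prop :=
  (v, b) ∈ C ∧ ρ v = none ∧ ∀ l ∈ C, l ≠ (v, b) → ρ l.1 = some (!l.2)

/-- BCP-compliance of a decision tree: at every internal node whose path assignment
makes some clause of `α` unit, the node is labeled by the variable `v` of the
unassigned literal `(v, b)` of some unit clause `C` of `α`, and the child along the
edge `v := ¬b` is a leaf labeled by `C`. -/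
def BCPOk (α : CNF) : PAssign → DTree → Prop
  | _, .leaf _ => True
  | ρ, .node v t0 t1 =>
      ((∃ C ∈ α, ∃ w b, UnitClause ρ C w b) →
        ∃ C ∈ α, ∃ b, UnitClause ρ C v b ∧
          cond b (t0 = DTree.leaf C) (t1 = DTree.leaf C)) ∧
      BCPOk α (extendP ρ v false) t0 ∧ BCPOk α (extendP ρ v true) t1

/-- A BCP-compliant decision-tree refutation of `α`. -/
def IsBCPRefutation (α : CNF) (t : DTree) : Prop :=
  IsDLLRefutation α t ∧ BCPOk α (fun _ => none) t

/-- The variables of `α` all lie in `V`. -/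
def VarsIn (α : CNF) (V : Finset Var) : Prop :=
  ∀ C ∈ α, ∀ l ∈ C, l.1 ∈ V

/-- The fresh chain variable `lᵢᵖ` for the literal `p = (x, s)` over `a, b, c`
(encoded as variables `0, 1, 2`); injective for `x < 3`, `i ≥ 1`, and disjoint
from `{0, 1, 2}`. -/
def chainVar (x : Var) (s : Bool) (i : ℕ) : Var :=
  3 + (x + 3 * cond s 1 0) + 6 * i

/-- The eight width-3 clauses over the variables `a = 0`, `b = 1`, `c = 2`:
all possible disjunctions of literals of `a`, `b`, `c`. -/
def signClauses : Finset Clause :=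
  (Finset.univ : Finset (Bool × Bool × Bool)).image
    (fun ε => ({(0, ε.1), (1, ε.2.1), (2, ε.2.2)} : Clause))

/-- For each of the six literals `p = (x, s)` over `a, b, c`, the chain clauses
`{p, l₁ᵖ}` and `{¬lᵢᵖ, l₍ᵢ₊₁₎ᵖ}` for `1 ≤ i ≤ k - 1`. -/
def chainClauses (k : ℕ) : Finset Clause :=
  ((Finset.range 3) ×ˢ (Finset.univ : Finset Bool)).biUnion fun q =>
    insert ({(q.1, q.2), (chainVar q.1 q.2 1, true)} : Clause)
      ((Finset.Icc 1 (k - 1)).image fun i =>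
        ({(chainVar q.1 q.2 i, false), (chainVar q.1 q.2 (i + 1), true)} : Clause))

/-- The formula `F_k` separating DLL from DLL + BCP. -/
def Fk (k : ℕ) : CNF := signClauses ∪ chainClauses k

lemma dll_aux (α : CNF) : ∀ (t : DTree) (ρ : PAssign), DLLOk α ρ t →
    ∃ r : RTree, ResOk α r ∧ Falsified ρ r.clause ∧ r.size ≤ t.size := by
  intro t
  induction t with
  | leaf C =>
    intro ρ h
    exact ⟨.leaf C, h.1, h.2, le_refl _⟩
  | node v t0 t1 ih0 ih1 =>
    intro ρ h
    obtain ⟨hv, h0, h1⟩ := h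
    obtain ⟨r0, hr0, hf0, hs0⟩ := ih0 _ h0
    obtain ⟨r1, hr1, hf1, hs1⟩ := ih1 _ h1
    by_cases c0 : (v, true) ∈ r0.clause
    · by_cases c1 : (v, false) ∈ r1.clause
      · refine ⟨.node (r0.clause.erase (v, true) ∪ r1.clause.erase (v, false)) v r0 r1,
          ⟨hr0, hr1, c0, c1, rfl⟩, ?_, ?_⟩
        · intro l hl
          simp only [RTree.clause, Finset.mem_union, Finset.mem_erase] at hl
          have hlv : l.1 ≠ v := by
            rcases hl with ⟨hne, hm⟩ | ⟨hne, hm⟩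
            · intro hx
              have := hf0 l hm
              simp [extendP, hx] at this
              exact hne (Prod.ext hx this)
            · intro hx
              have := hf1 l hm
              simp [extendP, hx] at this
              exact hne (Prod.ext hx this)
          rcases hl with ⟨_, hm⟩ | ⟨_, hm⟩
          · have := hf0 l hm; simpa [extendP, hlv] using this
          · have := hf1 l hm; simpa [extendP, hlv] using this
        · simp [RTree.size, DTree.size]; omega
      · refine ⟨r1, hr1, ?_, le_trans hs1 (by simp [DTree.size]; omega)⟩
        intro l hl
        have := hf1 l hl
        have hlv : l.1 ≠ v := by
          intro hx
          simp [extendP, hx] at this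
          apply c1; have : l = (v, false) := Prod.ext hx (by simpa using this.symm)
          rwa [← this]
        simpa [extendP, hlv] using this
    · refine ⟨r0, hr0, ?_, le_trans hs0 (by simp [DTree.size]; omega)⟩
      intro l hl
      have := hf0 l hl
      have hlv : l.1 ≠ v := by
        intro hx
        simp [extendP, hx] at this
        apply c0; have : l = (v, true) := Prod.ext hx (by simpa using this.symm)
        rwa [← this]
      simpa [extendP, hlv] using this


/-- If a CNF formula `α` has a decision-tree (DLL) refutation of size `k`,
then `α` has a tree-like resolution refutation of size at most `k`. -/
theorem dll_to_tlr (α : CNF) (k : ℕ) (t : DTree)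
    (ht : IsDLLRefutation α t) (hk : t.size = k) :
    ∃ r : RTree, IsTLRRefutation α r ∧ r.size ≤ k := by
  obtain ⟨r, hr, hf, hs⟩ := dll_aux α t _ ht
  refine ⟨r, ⟨hr, ?_⟩, hk ▸ hs⟩
  ext l
  simp only [Finset.notMem_empty, iff_false]
  intro hl
  simpa using hf l hl
end

section
/- If a CNF formula α has a tree-like resolution refutation of size k, then α has a decision-tree (DLL) refutation of size at most k. -/
lemma tlr_key (α : CNF) : ∀ r : RTree, ResOk α r → ∀ ρ : PAssign,
    Falsified ρ r.clause → ∃ t : DTree, DLLOk α ρ t ∧ t.size ≤ r.size := by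
  intro r
  induction r with
  | leaf C =>
    intro h ρ hρ
    exact ⟨.leaf C, ⟨h, hρ⟩, le_refl _⟩
  | node C v t1 t2 ih1 ih2 =>
    intro h ρ hρ
    obtain ⟨h1, h2, hv1, hv2, hC⟩ := h
    simp only [RTree.clause] at hρ
    subst hC
    cases hρv : ρ v with
    | some b =>
      cases b with
      | false =>
        have hf : Falsified ρ t1.clause := by
          intro l hl
          by_cases he : l = (v, true)
          · subst he; simpa using hρv
          · exact hρ l (Finset.mem_union_left _ (Finset.mem_erase.2 ⟨he, hl⟩))
        obtain ⟨t, ht, hs⟩ := ih1 h1 ρ hf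
        exact ⟨t, ht, hs.trans (by simp [RTree.size]; omega)⟩
      | true =>
        have hf : Falsified ρ t2.clause := by
          intro l hl
          by_cases he : l = (v, false)
          · subst he; simpa using hρv
          · exact hρ l (Finset.mem_union_right _ (Finset.mem_erase.2 ⟨he, hl⟩))
        obtain ⟨t, ht, hs⟩ := ih2 h2 ρ hf
        exact ⟨t, ht, hs.trans (by simp [RTree.size]; omega)⟩
    | none =>
      have hf1 : Falsified (extendP ρ v false) t1.clause := by
        intro l hl
        by_cases he : l = (v, true)
        · subst he; simp [extendP]
        · have hne : l.1 ≠ v := by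
            intro hl1
            have : l = (v, false) := by
              obtain ⟨a, b⟩ := l
              cases b
              · simp_all
              · exact absurd (by simp_all : (a, true) = (v, true)) he
            subst this
            have := hρ (v, false) (Finset.mem_union_left _ (Finset.mem_erase.2 ⟨by simp, hl⟩))
            simp_all
          have := hρ l (Finset.mem_union_left _ (Finset.mem_erase.2 ⟨he, hl⟩))
          simpa [extendP, hne] using this
      have hf2 : Falsified (extendP ρ v true) t2.clause := by
        intro l hl
        by_cases he : l = (v, false)
        · subst he; simp [extendP]
        · have hne : l.1 ≠ v := by
            intro hl1
            have : l = (v, true) := by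
              obtain ⟨a, b⟩ := l
              cases b
              · exact absurd (by simp_all : (a, false) = (v, false)) he
              · simp_all
            subst this
            have := hρ (v, true) (Finset.mem_union_right _ (Finset.mem_erase.2 ⟨by simp, hl⟩))
            simp_all
          have := hρ l (Finset.mem_union_right _ (Finset.mem_erase.2 ⟨he, hl⟩))
          simpa [extendP, hne] using this
      obtain ⟨u0, hu0, hs0⟩ := ih1 h1 _ hf1
      obtain ⟨u1, hu1, hs1⟩ := ih2 h2 _ hf2
      exact ⟨.node v u0 u1, ⟨hρv, hu0, hu1⟩, by simp [DTree.size, RTree.size]; omega⟩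

/-- If a CNF formula `α` has a tree-like resolution refutation of size `k`,
then `α` has a decision-tree (DLL) refutation of size at most `k`. -/
theorem tlr_to_dll (α : CNF) (k : ℕ) (r : RTree)
    (hr : IsTLRRefutation α r) (hk : r.size = k) :
    ∃ t : DTree, IsDLLRefutation α t ∧ t.size ≤ k := by
  obtain ⟨hok, hempty⟩ := hr
  have hfals : Falsified (fun _ => none) r.clause := by
    intro l hl; rw [hempty] at hl; simp at hl
  obtain ⟨t, ht, hs⟩ := tlr_key α r hok _ hfals
  exact ⟨t, ht, hk ▸ hs⟩
end

section
/- For every unsatisfiable CNF formula α, the minimum size of a tree-like resolution refutation of α equals the minimum size of a decision-tree (DLL) refutation of α (i.e., tree-like resolution and DLL are equally strong proof systems). -/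
/-!
A decision tree and a tree-like resolution refutation are the same tree read in opposite
directions: the clause derived at a node is one falsified by the partial assignment along
the path to that node, and the pivot of a resolution step is the variable decided there.
In either translation a node whose decision literal does not occur in a child's clause, or
whose pivot is already assigned, is replaced by one of its subtrees, so sizes never grow.
-/

namespace Falsified

variable {ρ : PAssign} {C D : Clause}

theorem mono (h : Falsified ρ C) (hDC : D ⊆ C) : Falsified ρ D :=
  fun l hl => h l (hDC hl)

theorem union (hC : Falsified ρ C) (hD : Falsified ρ D) : Falsified ρ (C ∪ D) := by
  intro l hl
  rcases Finset.mem_union.1 hl with hl | hl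
  exacts [hC l hl, hD l hl]

theorem of_erase {l : Lit} (h : Falsified ρ (C.erase l)) (hl : ρ l.1 = some (!l.2)) :
    Falsified ρ C := by
  intro m hm
  by_cases hml : m = l
  · exact hml ▸ hl
  · exact h m (Finset.mem_erase.2 ⟨hml, hm⟩)

theorem eq_empty_of_none (h : Falsified (fun _ => none) C) : C = ∅ :=
  Finset.eq_empty_iff_forall_notMem.2 fun l hl => by simpa using h l hl

end Falsified

theorem falsified_extendP_iff {ρ : PAssign} {v : Var} (hv : ρ v = none) (b : Bool)
    (C : Clause) : Falsified (extendP ρ v b) C ↔ Falsified ρ (C.erase (v, !b)) := by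
  constructor
  · intro h l hl
    obtain ⟨hne, hlC⟩ := Finset.mem_erase.1 hl
    have hl' := h l hlC
    unfold extendP at hl'
    split_ifs at hl' with hlv
    · refine absurd (Prod.ext hlv ?_) hne
      simp only [Option.some.injEq] at hl'
      simp [hl']
    · exact hl'
  · intro h l hl
    by_cases hne : l = (v, !b)
    · simp [hne, extendP]
    · have hl' := h l (Finset.mem_erase.2 ⟨hne, hl⟩)
      unfold extendP
      split_ifs with hlv
      · simp [hlv, hv] at hl'
      · exact hl'

section

variable {α : CNF}

theorem DLLOk.exists_resOk {ρ : PAssign} {t : DTree} (h : DLLOk α ρ t) :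
    ∃ r : RTree, ResOk α r ∧ Falsified ρ r.clause ∧ r.size ≤ t.size := by
  induction t generalizing ρ with
  | leaf C => exact ⟨.leaf C, h.1, h.2, le_rfl⟩
  | node v t0 t1 ih0 ih1 =>
    obtain ⟨hv, h0, h1⟩ := h
    obtain ⟨r0, hr0, hf0, hs0⟩ := ih0 h0
    obtain ⟨r1, hr1, hf1, hs1⟩ := ih1 h1
    rw [falsified_extendP_iff hv, Bool.not_false] at hf0
    rw [falsified_extendP_iff hv, Bool.not_true] at hf1
    by_cases hm0 : (v, true) ∈ r0.clause
    · by_cases hm1 : (v, false) ∈ r1.clause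
      · refine ⟨.node _ v r0 r1, ⟨hr0, hr1, hm0, hm1, rfl⟩, hf0.union hf1, ?_⟩
        simp only [RTree.size, DTree.size]; omega
      · rw [Finset.erase_eq_of_notMem hm1] at hf1
        exact ⟨r1, hr1, hf1, by simp only [DTree.size]; omega⟩
    · rw [Finset.erase_eq_of_notMem hm0] at hf0
      exact ⟨r0, hr0, hf0, by simp only [DTree.size]; omega⟩

theorem ResOk.exists_dllOk {ρ : PAssign} {r : RTree} (h : ResOk α r)
    (hf : Falsified ρ r.clause) : ∃ t : DTree, DLLOk α ρ t ∧ t.size ≤ r.size := by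
  induction r generalizing ρ with
  | leaf C => exact ⟨.leaf C, ⟨h, hf⟩, le_rfl⟩
  | node C v r1 r2 ih1 ih2 =>
    obtain ⟨hr1, hr2, -, -, rfl⟩ := h
    have hf1 : Falsified ρ (r1.clause.erase (v, true)) := hf.mono Finset.subset_union_left
    have hf2 : Falsified ρ (r2.clause.erase (v, false)) := hf.mono Finset.subset_union_right
    rcases hv : ρ v with _ | _ | _
    · obtain ⟨t0, ht0, hs0⟩ := ih1 hr1 ((falsified_extendP_iff hv false _).2 hf1)
      obtain ⟨t1, ht1, hs1⟩ := ih2 hr2 ((falsified_extendP_iff hv true _).2 hf2)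
      refine ⟨.node v t0 t1, ⟨hv, ht0, ht1⟩, ?_⟩
      simp only [DTree.size, RTree.size]; omega
    · obtain ⟨t, ht, hs⟩ := ih1 hr1 (hf1.of_erase hv)
      exact ⟨t, ht, by simp only [RTree.size]; omega⟩
    · obtain ⟨t, ht, hs⟩ := ih2 hr2 (hf2.of_erase hv)
      exact ⟨t, ht, by simp only [RTree.size]; omega⟩

end

theorem Nat.sInf_eq_sInf_of_forall_exists_le {S T : Set ℕ}
    (hST : ∀ k ∈ S, ∃ j ∈ T, j ≤ k) (hTS : ∀ k ∈ T, ∃ j ∈ S, j ≤ k) :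
    sInf S = sInf T := by
  rcases T.eq_empty_or_nonempty with rfl | hT
  · have hS : S = ∅ := Set.eq_empty_of_forall_notMem fun k hk => by simpa using hST k hk
    rw [hS]
  · obtain ⟨j, hjS, hj⟩ := hTS _ (Nat.sInf_mem hT)
    obtain ⟨i, hiT, hi⟩ := hST _ (Nat.sInf_mem ⟨j, hjS⟩)
    exact le_antisymm ((Nat.sInf_le hjS).trans hj) ((Nat.sInf_le hiT).trans hi)

theorem tlr_equals_dll_general (α : CNF) :
    sInf {k : ℕ | ∃ r : RTree, IsTLRRefutation α r ∧ r.size = k}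
      = sInf {k : ℕ | ∃ t : DTree, IsDLLRefutation α t ∧ t.size = k} := by
  refine Nat.sInf_eq_sInf_of_forall_exists_le ?_ ?_
  · rintro _ ⟨r, ⟨hr, hempty⟩, rfl⟩
    obtain ⟨t, ht, hs⟩ :=
      hr.exists_dllOk (ρ := fun _ => none) (by simp [hempty, Falsified])
    exact ⟨t.size, ⟨t, ht, rfl⟩, hs⟩
  · rintro _ ⟨t, ht, rfl⟩
    obtain ⟨r, hr, hf, hs⟩ := DLLOk.exists_resOk ht
    exact ⟨r.size, ⟨r, ⟨hr, hf.eq_empty_of_none⟩, rfl⟩, hs⟩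

/-- For every unsatisfiable CNF formula `α`, the minimum size of a
tree-like resolution refutation of `α` equals the minimum size of a decision-tree
(DLL) refutation of `α`. -/
theorem tlr_equals_dll (α : CNF) (h : Unsat α) :
    sInf {k : ℕ | ∃ r : RTree, IsTLRRefutation α r ∧ r.size = k}
      = sInf {k : ℕ | ∃ t : DTree, IsDLLRefutation α t ∧ t.size = k} :=
  tlr_equals_dll_general α
end

section
/- DLL with BCP p-simulates DLL: if a CNF formula α, all of whose variables lie in a finite set V of size n, has a decision-tree (DLL) refutation of size s, then α has a BCP-compliant decision-tree refutation of size at most s + n·(s + 1) (BCP adds at most n forced decisions per leaf of the original tree). -/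
/-!
Walk down the DLL tree. Whenever the path assignment makes a clause unit, insert the forced
decision first: its opposite branch is closed at once by the unit clause, and the search
continues with the original tree restricted by the forced value. Restriction never enlarges
a tree and each forced decision assigns one more variable of `V`, so, with `U` the number of
variables of `V` still unassigned, the bound `s + U * (s + 1)` survives an induction on `U + s`.
-/

section Assignments

variable {ρ : PAssign} {v w : Var} {b c : Bool}

lemma extendP_idem : extendP (extendP ρ v b) v b = extendP ρ v b := by
  funext x
  by_cases hx : x = v <;> simp [extendP, hx]

lemma extendP_comm (h : v ≠ w) :
    extendP (extendP ρ w c) v b = extendP (extendP ρ v b) w c := by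
  funext x
  by_cases hx : x = v
  · subst hx; simp [extendP, h]
  · simp [extendP, hx]

lemma extendP_apply_of_ne (h : w ≠ v) : extendP ρ v b w = ρ w := if_neg h

lemma Falsified.extendP {C : Clause} (h : Falsified ρ C) (hv : ρ v ≠ some !b) :
    Falsified (extendP ρ v b) C := by
  rintro ⟨x, c⟩ hl
  have hl' := h _ hl
  by_cases hxv : x = v
  · subst hxv
    rw [hl'] at hv
    cases b <;> cases c <;> simp_all [_root_.extendP]
  · simpa [_root_.extendP, hxv] using hl'

lemma UnitClause.falsified_extendP {C : Clause} (hu : UnitClause ρ C v b) :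
    Falsified (extendP ρ v !b) C := by
  obtain ⟨-, hv, hrest⟩ := hu
  intro l hl
  by_cases hlb : l = (v, b)
  · subst hlb; simp [extendP]
  · have hl := hrest l hl hlb
    have hlv : l.1 ≠ v := fun h => by rw [h, hv] at hl; cases hl
    simpa [extendP, hlv] using hl

end Assignments

def DTree.restrict (v : Var) (b : Bool) : DTree → DTree
  | .leaf C => .leaf C
  | .node w t0 t1 =>
      if w = v then cond b (t1.restrict v b) (t0.restrict v b)
      else .node w (t0.restrict v b) (t1.restrict v b)

lemma DTree.size_restrict_le (v : Var) (b : Bool) (t : DTree) :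
    (t.restrict v b).size ≤ t.size := by
  induction t with
  | leaf C => simp [restrict]
  | node w t0 t1 ih0 ih1 =>
    by_cases hw : w = v
    · cases b <;> simp [restrict, size, hw] <;> omega
    · simp [restrict, size, hw]; omega

lemma DLLOk.restrict {α : CNF} {v : Var} {b : Bool} {t : DTree} {ρ : PAssign}
    (h : DLLOk α ρ t) (hv : ρ v ≠ some !b) :
    DLLOk α (extendP ρ v b) (t.restrict v b) := by
  induction t generalizing ρ with
  | leaf C => exact ⟨h.1, h.2.extendP hv⟩
  | node w t0 t1 ih0 ih1 =>
    obtain ⟨hw, h0, h1⟩ := h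
    by_cases hwv : w = v
    · subst hwv
      have hb : extendP ρ w b w ≠ some !b := by simp [extendP]
      cases b
      · simpa [DTree.restrict, extendP_idem] using ih0 h0 hb
      · simpa [DTree.restrict, extendP_idem] using ih1 h1 hb
    · have hv' : ∀ c, extendP ρ w c v ≠ some !b := fun c => by
        rwa [extendP_apply_of_ne (Ne.symm hwv)]
      simp only [DTree.restrict, if_neg hwv]
      refine ⟨by rwa [extendP_apply_of_ne hwv], ?_, ?_⟩
      · simpa [extendP_comm (Ne.symm hwv)] using ih0 h0 (hv' false)
      · simpa [extendP_comm (Ne.symm hwv)] using ih1 h1 (hv' true)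

def unassigned (V : Finset Var) (ρ : PAssign) : Finset Var :=
  V.filter (ρ · = none)

lemma unassigned_extendP (V : Finset Var) (ρ : PAssign) (v : Var) (b : Bool) :
    unassigned V (extendP ρ v b) = (unassigned V ρ).erase v := by
  ext x
  simp only [unassigned, Finset.mem_filter, Finset.mem_erase]
  by_cases hx : x = v <;> simp [extendP, hx]

lemma card_unassigned_extendP_le (V : Finset Var) (ρ : PAssign) (v : Var) (b : Bool) :
    (unassigned V (extendP ρ v b)).card ≤ (unassigned V ρ).card := by
  rw [unassigned_extendP]
  exact Finset.card_erase_le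

lemma card_unassigned_extendP_add_one {V : Finset Var} {ρ : PAssign} {v : Var}
    (hv : v ∈ unassigned V ρ) (b : Bool) :
    (unassigned V (extendP ρ v b)).card + 1 = (unassigned V ρ).card := by
  rw [unassigned_extendP]
  exact Finset.card_erase_add_one hv

lemma unassigned_empty (V : Finset Var) : unassigned V (fun _ => none) = V := by
  simp [unassigned]

lemma exists_bcp_of_unitClause {α : CNF} {ρ : PAssign} {C : Clause} {v : Var} {b : Bool}
    (hC : C ∈ α) (hu : UnitClause ρ C v b) {t : DTree}
    (hok : DLLOk α (extendP ρ v b) t) (hbcp : BCPOk α (extendP ρ v b) t) :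
    ∃ t', DLLOk α ρ t' ∧ BCPOk α ρ t' ∧ t'.size = t.size + 1 := by
  have hleaf : DLLOk α (extendP ρ v !b) (.leaf C) := ⟨hC, hu.falsified_extendP⟩
  have hv := hu.2.1
  cases b
  · exact ⟨.node v t (.leaf C), ⟨hv, hok, hleaf⟩,
      ⟨fun _ => ⟨C, hC, false, hu, rfl⟩, hbcp, trivial⟩, by simp [DTree.size]⟩
  · exact ⟨.node v (.leaf C) t, ⟨hv, hleaf, hok⟩,
      ⟨fun _ => ⟨C, hC, true, hu, rfl⟩, trivial, hbcp⟩, by simp [DTree.size]⟩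

theorem DLLOk.exists_bcpOk {α : CNF} {V : Finset Var} (hvars : VarsIn α V) {ρ : PAssign}
    {t : DTree} (h : DLLOk α ρ t) :
    ∃ t', DLLOk α ρ t' ∧ BCPOk α ρ t' ∧
      t'.size ≤ t.size + (unassigned V ρ).card * (t.size + 1) := by
  by_cases hunit : ∃ C ∈ α, ∃ v b, UnitClause ρ C v b
  · obtain ⟨C, hC, v, b, hu⟩ := hunit
    have hvU : v ∈ unassigned V ρ := Finset.mem_filter.2 ⟨hvars C hC _ hu.1, hu.2.1⟩
    have hcard := card_unassigned_extendP_add_one hvU b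
    have hrestrict := t.size_restrict_le v b
    obtain ⟨tr, hok, hbcp, hsz⟩ :=
      DLLOk.exists_bcpOk hvars (h.restrict (v := v) (b := b) (by simp [hu.2.1]))
    obtain ⟨t', hok', hbcp', hsz'⟩ := exists_bcp_of_unitClause hC hu hok hbcp
    refine ⟨t', hok', hbcp', ?_⟩
    nlinarith
  · match t with
    | .leaf C => exact ⟨.leaf C, h, trivial, Nat.zero_le _⟩
    | .node w t0 t1 =>
      obtain ⟨hw, h0, h1⟩ := h
      have hcard0 := card_unassigned_extendP_le V ρ w false
      have hcard1 := card_unassigned_extendP_le V ρ w true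
      obtain ⟨t0', hok0, hbcp0, hsz0⟩ := DLLOk.exists_bcpOk hvars h0
      obtain ⟨t1', hok1, hbcp1, hsz1⟩ := DLLOk.exists_bcpOk hvars h1
      refine ⟨.node w t0' t1', ⟨hw, hok0, hok1⟩,
        ⟨fun hunit' => absurd hunit' hunit, hbcp0, hbcp1⟩, ?_⟩
      simp only [DTree.size]
      nlinarith
termination_by (unassigned V ρ).card + t.size
decreasing_by
  · omega
  all_goals simp only [DTree.size]; omega

/-- DLL with BCP p-simulates DLL: if a CNF formula `α`, all of whose
variables lie in a finite set `V` of size `n`, has a DLL refutation of size `s`, then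
`α` has a BCP-compliant decision-tree refutation of size at most `s + n * (s + 1)`. -/
theorem bcp_psimulates_dll (α : CNF) (V : Finset Var) (n : ℕ) (hV : V.card = n)
    (hvars : VarsIn α V) (t : DTree) (ht : IsDLLRefutation α t) (s : ℕ)
    (hs : t.size = s) :
    ∃ t' : DTree, IsBCPRefutation α t' ∧ t'.size ≤ s + n * (s + 1) := by
  obtain ⟨t', hok, hbcp, hsz⟩ := DLLOk.exists_bcpOk hvars ht
  rw [unassigned_empty, hV, hs] at hsz
  exact ⟨t', ⟨hok, hbcp⟩, hsz⟩
end

section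
/- Let S be a consistent finite set of literals (containing no literal together with its complement), let v be a variable such that neither (v,true) nor (v,false) is in S nor has its complement in S, and let b be a Boolean. Suppose C₁ is a clause with (v,b) ∈ C₁ such that every literal of C₁ \ {(v,b)} has its complement in S, and C₂ is a clause with (v,¬b) ∈ C₂ such that every literal of C₂ \ {(v,¬b)} has its complement in S. Then the resolvent R = (C₁ \ {(v,b)}) ∪ (C₂ \ {(v,¬b)}) of C₁ and C₂ on v is not a tautology (C₁ and C₂ are non-redundantly resolvable on v), and every literal of R has its complement in S (i.e., R is falsified by the partial assignment determined by S). -/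
/-- A clause is a tautology if it contains some literal together with its complement. -/
def Tautology (C : Clause) : Prop := ∃ l ∈ C, (l.1, !l.2) ∈ C

/-- A finite set of literals is consistent if it contains no literal with its complement. -/
def ConsistentLits (S : Finset Lit) : Prop := ∀ l ∈ S, (l.1, !l.2) ∉ S

/-- If `S` is a consistent set of literals not mentioning `v`, `C₁` is a
clause containing `(v, b)` all of whose other literals are falsified by `S`, and `C₂`
is a clause containing `(v, ¬b)` all of whose other literals are falsified by `S`,
then the resolvent of `C₁` and `C₂` on `v` is not a tautology (they are
non-redundantly resolvable on `v`) and every literal of the resolvent has its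
complement in `S`. -/
theorem resolvent_nontautological_and_falsified (S : Finset Lit)
    (hS : ConsistentLits S) (v : Var)
    (hv : (v, true) ∉ S ∧ (v, false) ∉ S) (b : Bool) (C₁ C₂ : Clause)
    (h1 : (v, b) ∈ C₁) (h2 : (v, !b) ∈ C₂)
    (hf1 : ∀ l ∈ C₁.erase (v, b), (l.1, !l.2) ∈ S)
    (hf2 : ∀ l ∈ C₂.erase (v, !b), (l.1, !l.2) ∈ S) :
    ¬ Tautology (C₁.erase (v, b) ∪ C₂.erase (v, !b)) ∧
    ∀ l ∈ C₁.erase (v, b) ∪ C₂.erase (v, !b), (l.1, !l.2) ∈ S := by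
  have hall : ∀ l ∈ C₁.erase (v, b) ∪ C₂.erase (v, !b), (l.1, !l.2) ∈ S := by
    intro l hl
    rcases Finset.mem_union.mp hl with h | h
    · exact hf1 l h
    · exact hf2 l h
  refine ⟨?_, hall⟩
  rintro ⟨l, hl, hl'⟩
  have ha := hall l hl
  have hb := hall _ hl'
  simp only [Bool.not_not] at hb
  exact hS _ ha (by simpa using hb)
end

section
/- Let H be a tree-like resolution refutation of a CNF formula α and let u be an internal (non-leaf) node of H. For each internal node w on the path from the root to u with pivot variable v_w, record the assignment v_w := ¬b, where the path continues from w into the child whose clause contains the literal (v_w, b); assume these recorded assignments are consistent (no variable is recorded with both values), and call the resulting partial assignment ρ_u. If D is a clause of α such that every literal (v,b) of D satisfies ρ_u(v) = ¬b (D is falsified by ρ_u), then α has a tree-like resolution refutation of size strictly smaller than the size of H. -/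
/-- The subtree of a resolution tree at the end of a path given by a list of
directions (`true` = go to the child containing `(v, true)`). -/
def subtreeAt : RTree → List Bool → Option RTree
  | t, [] => some t
  | .leaf _, _ :: _ => none
  | .node _ _ t1 t2, d :: ds => subtreeAt (cond d t1 t2) ds

/-- The assignments recorded along a path in a resolution tree: at an internal node
with pivot `v`, descending into the child whose clause contains `(v, b)` records the
assignment `v := ¬b`. -/
def pathAssignments : RTree → List Bool → List (Var × Bool)
  | _, [] => []
  | .leaf _, _ :: _ => []
  | .node _ v t1 t2, d :: ds =>
      (v, cond d false true) :: pathAssignments (cond d t1 t2) ds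

lemma tlr_shorten_aux (α : CNF) (D : Clause) (hD : D ∈ α) :
    ∀ (p : List Bool) (t u : RTree), subtreeAt t p = some u → ResOk α t →
    ∃ t' : RTree, ResOk α t' ∧
      t'.clause ⊆ t.clause ∪ D.filter (fun l => (l.1, !l.2) ∉ pathAssignments t p) ∧
      t'.size + u.size ≤ t.size := by
  intro p
  induction p with
  | nil =>
      intro t u h ht
      refine ⟨.leaf D, hD, ?_, ?_⟩
      · intro x hx
        simp only [pathAssignments, List.not_mem_nil, not_false_iff, Finset.filter_true_of_mem,
          Finset.mem_union]
        exact Or.inr (by simpa [RTree.clause] using hx)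
      · simp only [subtreeAt, Option.some.injEq] at h
        subst h; simp [RTree.size]
  | cons d ds ih =>
      intro t u h ht
      match t with
      | .leaf C => simp [subtreeAt] at h
      | .node C v t1 t2 =>
        obtain ⟨h1, h2, h3, h4, h5⟩ := ht
        cases d with
        | true =>
            simp only [subtreeAt, cond_true] at h
            obtain ⟨t1', ht1', hsub, hsize⟩ := ih t1 u h h1
            by_cases hv : (v, true) ∈ t1'.clause
            · refine ⟨.node (t1'.clause.erase (v, true) ∪ t2.clause.erase (v, false)) v t1' t2,
                ⟨ht1', h2, hv, h4, rfl⟩, ?_, ?_⟩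
              · intro x hx
                have hx' : x ∈ t1'.clause.erase (v, true) ∪ t2.clause.erase (v, false) := hx
                rcases Finset.mem_union.mp hx' with hxe | hxe
                · obtain ⟨hne, hx⟩ := Finset.mem_erase.mp hxe
                  rcases Finset.mem_union.mp (hsub hx) with hx1 | hx1
                  · exact Finset.mem_union_left _ (h5 ▸ Finset.mem_union_left _
                      (Finset.mem_erase.mpr ⟨hne, hx1⟩))
                  · simp only [Finset.mem_filter] at hx1
                    refine Finset.mem_union_right _ (Finset.mem_filter.mpr ⟨hx1.1, ?_⟩)
                    simp only [pathAssignments, cond_true, List.mem_cons, not_or]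
                    refine ⟨?_, hx1.2⟩
                    intro hc
                    apply hne
                    have hc' := Prod.ext_iff.mp hc
                    exact Prod.ext hc'.1 (by simpa using congrArg Bool.not hc'.2)
                · exact Finset.mem_union_left _ (h5 ▸ Finset.mem_union_right _ hxe)
              · simp only [RTree.size]; omega
            · refine ⟨t1', ht1', ?_, ?_⟩
              · intro x hx
                rcases Finset.mem_union.mp (hsub hx) with hx1 | hx1
                · have hne : x ≠ (v, true) := fun he => hv (he ▸ hx)
                  exact Finset.mem_union_left _ (h5 ▸ Finset.mem_union_left _
                    (Finset.mem_erase.mpr ⟨hne, hx1⟩))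
                · simp only [Finset.mem_filter] at hx1
                  refine Finset.mem_union_right _ (Finset.mem_filter.mpr ⟨hx1.1, ?_⟩)
                  simp only [pathAssignments, cond_true, List.mem_cons, not_or]
                  refine ⟨?_, hx1.2⟩
                  intro hc
                  apply hv
                  have hc' := Prod.ext_iff.mp hc
                  have hx2 : x = (v, true) := Prod.ext hc'.1 (by simpa using congrArg Bool.not hc'.2)
                  exact hx2 ▸ hx
              · simp only [RTree.size]; omega
        | false =>
            simp only [subtreeAt, cond_false] at h
            obtain ⟨t2', ht2', hsub, hsize⟩ := ih t2 u h h2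
            by_cases hv : (v, false) ∈ t2'.clause
            · refine ⟨.node (t1.clause.erase (v, true) ∪ t2'.clause.erase (v, false)) v t1 t2',
                ⟨h1, ht2', h3, hv, rfl⟩, ?_, ?_⟩
              · intro x hx
                have hx' : x ∈ t1.clause.erase (v, true) ∪ t2'.clause.erase (v, false) := hx
                rcases Finset.mem_union.mp hx' with hxe | hxe
                · exact Finset.mem_union_left _ (h5 ▸ Finset.mem_union_left _ hxe)
                · obtain ⟨hne, hx⟩ := Finset.mem_erase.mp hxe
                  rcases Finset.mem_union.mp (hsub hx) with hx1 | hx1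
                  · exact Finset.mem_union_left _ (h5 ▸ Finset.mem_union_right _
                      (Finset.mem_erase.mpr ⟨hne, hx1⟩))
                  · simp only [Finset.mem_filter] at hx1
                    refine Finset.mem_union_right _ (Finset.mem_filter.mpr ⟨hx1.1, ?_⟩)
                    simp only [pathAssignments, cond_false, List.mem_cons, not_or]
                    refine ⟨?_, hx1.2⟩
                    intro hc
                    apply hne
                    have hc' := Prod.ext_iff.mp hc
                    exact Prod.ext hc'.1 (by simpa using congrArg Bool.not hc'.2)
              · simp only [RTree.size]; omega
            · refine ⟨t2', ht2', ?_, ?_⟩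
              · intro x hx
                rcases Finset.mem_union.mp (hsub hx) with hx1 | hx1
                · have hne : x ≠ (v, false) := fun he => hv (he ▸ hx)
                  exact Finset.mem_union_left _ (h5 ▸ Finset.mem_union_right _
                    (Finset.mem_erase.mpr ⟨hne, hx1⟩))
                · simp only [Finset.mem_filter] at hx1
                  refine Finset.mem_union_right _ (Finset.mem_filter.mpr ⟨hx1.1, ?_⟩)
                  simp only [pathAssignments, cond_false, List.mem_cons, not_or]
                  refine ⟨?_, hx1.2⟩
                  intro hc
                  apply hv
                  have hc' := Prod.ext_iff.mp hc
                  have hx2 : x = (v, false) := Prod.ext hc'.1 (by simpa using congrArg Bool.not hc'.2)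
                  exact hx2 ▸ hx
              · simp only [RTree.size]; omega

/-- Let `H` be a tree-like resolution refutation of `α` and `u` an
internal node of `H` reached by `path`, such that the assignments recorded along the
path are consistent. If some clause `D` of `α` is falsified by the recorded path
assignment, then `α` has a tree-like resolution refutation of size strictly smaller
than the size of `H`. -/
theorem tlr_shortening (α : CNF) (H : RTree) (hH : IsTLRRefutation α H)
    (path : List Bool) (u : RTree) (hu : subtreeAt H path = some u)
    (hinternal : ∃ C v t1 t2, u = RTree.node C v t1 t2)
    (hcons : ∀ w : Var,
      ¬ ((w, true) ∈ pathAssignments H path ∧ (w, false) ∈ pathAssignments H path))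
    (D : Clause) (hD : D ∈ α)
    (hfals : ∀ l ∈ D, (l.1, !l.2) ∈ pathAssignments H path) :
    ∃ H' : RTree, IsTLRRefutation α H' ∧ H'.size < H.size := by
  obtain ⟨t', ht', hsub, hsize⟩ := tlr_shorten_aux α D hD path H u hu hH.1
  have hfilter : D.filter (fun l => (l.1, !l.2) ∉ pathAssignments H path) = ∅ := by
    apply Finset.filter_false_of_mem
    intro l hl
    simp [hfals l hl]
  have hclause : t'.clause = ∅ := by
    apply Finset.subset_empty.mp
    intro x hx
    have := hsub hx
    rw [hH.2, hfilter] at this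
    simpa using this
  obtain ⟨C, v, t1, t2, rfl⟩ := hinternal
  refine ⟨t', ⟨ht', hclause⟩, ?_⟩
  simp only [RTree.size] at hsize ⊢
  omega
end

section
/- For every k ≥ 1, in any BCP-compliant decision-tree refutation of F_k whose root node is labeled by one of the variables a, b, c, each of the two subtrees rooted at the children of the root contains at least k internal nodes (assigning one of a, b, c first falsifies one of the six literals p and forces the full unit-propagation cascade through the chain variables l₁ᵖ, …, l_kᵖ). -/
/-!
Deciding `v := !s` at the root falsifies the literal `p = (v, s)`. Follow the `true`-edges
from there: once `l₁ᵖ, …, lᵢᵖ` are set, no clause of `F_k` is falsified and the only unit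
clause is the chain clause forcing `lᵢ₊₁ᵖ`, since every other clause is satisfied or still has
two non-false literals. BCP-compliance therefore labels the first `k` nodes of this path by
`l₁ᵖ, …, l_kᵖ`.
-/

section Propagation

variable {ρ : PAssign} {C : Clause}

def Quiet (ρ : PAssign) (C : Clause) : Prop :=
  ¬ Falsified ρ C ∧ ∀ w b, ¬ UnitClause ρ C w b

lemma quiet_of_true_lit {l : Lit} (hl : l ∈ C) (htrue : ρ l.1 = some l.2) : Quiet ρ C := by
  refine ⟨fun hf => by simpa [htrue] using hf l hl, fun w b ⟨_, hw, hother⟩ => ?_⟩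
  by_cases h : l = (w, b)
  · subst h; simp [hw] at htrue
  · simpa [htrue] using hother l hl h

lemma quiet_of_two_not_false {l₁ l₂ : Lit} (h₁ : l₁ ∈ C) (h₂ : l₂ ∈ C) (hne : l₁.1 ≠ l₂.1)
    (hf₁ : ρ l₁.1 ≠ some (!l₁.2)) (hf₂ : ρ l₂.1 ≠ some (!l₂.2)) : Quiet ρ C := by
  refine ⟨fun hf => hf₁ (hf l₁ h₁), fun w b ⟨_, _, hother⟩ => ?_⟩
  by_cases h : l₁ = (w, b)
  · exact hf₂ (hother l₂ h₂ fun h' => hne (by rw [h, h']))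
  · exact hf₁ (hother l₁ h₁ h)

lemma unitClause_pair {l : Lit} {w : Var} {b : Bool} (hl : ρ l.1 = some (!l.2))
    (hw : ρ w = none) : UnitClause ρ {l, (w, b)} w b := by
  refine ⟨by simp, hw, fun l' hl' hne => ?_⟩
  rcases Finset.mem_insert.mp hl' with rfl | h
  · exact hl
  · exact absurd (Finset.mem_singleton.mp h) hne

lemma UnitClause.not_falsified {w : Var} {b : Bool} (h : UnitClause ρ C w b) :
    ¬ Falsified ρ C := fun hf => by simpa [h.2.1] using hf _ h.1

lemma UnitClause.unique {w w' : Var} {b b' : Bool} (h : UnitClause ρ C w b)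
    (h' : UnitClause ρ C w' b') : w = w' := by
  by_contra hne
  simpa [h.2.1] using h'.2.2 (w, b) h.1 fun heq => hne (congrArg Prod.fst heq)

lemma BCPOk.label_eq_of_forced {α : CNF} {w x : Var} {t0 t1 : DTree}
    (h : BCPOk α ρ (.node w t0 t1)) (hunit : ∃ C ∈ α, ∃ b, UnitClause ρ C x b)
    (honly : ∀ C ∈ α, ∀ y b, UnitClause ρ C y b → y = x) : w = x := by
  obtain ⟨C, hC, b, hu⟩ := hunit
  obtain ⟨C', hC', b', hu', -⟩ := h.1 ⟨C, hC, x, b, hu⟩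
  exact honly C' hC' w b' hu'

lemma le_size_of_forced_chain {α : CNF} {k : ℕ} {ρ : ℕ → PAssign} {x : ℕ → Var}
    (hstep : ∀ i, ρ (i + 1) = extendP (ρ i) (x i) true)
    (hfalse : ∀ i < k, ∀ C ∈ α, ¬ Falsified (ρ i) C)
    (hunit : ∀ i < k, ∃ C ∈ α, ∃ b, UnitClause (ρ i) C (x i) b)
    (honly : ∀ i < k, ∀ C ∈ α, ∀ y b, UnitClause (ρ i) C y b → y = x i) :
    ∀ (t : DTree) (i : ℕ), DLLOk α (ρ i) t → BCPOk α (ρ i) t → k - i ≤ t.size := by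
  intro t
  induction t with
  | leaf C =>
    intro i hD _
    by_contra hlt
    exact hfalse i (by omega) C hD.1 hD.2
  | node w t0 t1 _ ih1 =>
    intro i hD hB
    by_cases hik : k ≤ i
    · omega
    obtain rfl : w = x i := hB.label_eq_of_forced (hunit i (by omega)) (honly i (by omega))
    have h1 := ih1 (i + 1) (hstep i ▸ hD.2.2) (hstep i ▸ hB.2.2)
    simp only [DTree.size]
    omega

end Propagation

section Fk

lemma lt_chainVar {u : ℕ} (hu : u < 3) (x : Var) (s : Bool) (i : ℕ) : u < chainVar x s i := by
  unfold chainVar; omega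

lemma chainVar_inj {x x' : Var} {s s' : Bool} {i i' : ℕ} (hx : x < 3) (hx' : x' < 3) :
    chainVar x s i = chainVar x' s' i' ↔ x = x' ∧ s = s' ∧ i = i' := by
  refine ⟨fun h => ?_, by rintro ⟨rfl, rfl, rfl⟩; rfl⟩
  unfold chainVar Var at *
  cases s <;> cases s' <;> simp only [cond_false, cond_true, Bool.false_eq_true,
    Bool.true_eq_false, true_and] at h ⊢ <;> constructor <;> omega

lemma mem_Fk {k : ℕ} {C : Clause} :
    C ∈ Fk k ↔
      (∃ e₀ e₁ e₂ : Bool, C = {(0, e₀), (1, e₁), (2, e₂)}) ∨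
      ∃ q < 3, ∃ s : Bool,
        C = {(q, s), (chainVar q s 1, true)} ∨
        ∃ j, 1 ≤ j ∧ j ≤ k - 1 ∧ C = {(chainVar q s j, false), (chainVar q s (j + 1), true)} := by
  simp only [Fk, signClauses, chainClauses, Finset.mem_union, Finset.mem_image,
    Finset.mem_biUnion, Finset.mem_insert, Finset.mem_product, Finset.mem_range,
    Finset.mem_univ, Finset.mem_Icc, true_and, and_true, Prod.exists]
  constructor
  · rintro (⟨e₀, e₁, e₂, h⟩ | ⟨q, s, hq, h | ⟨j, hj, h⟩⟩)
    · exact .inl ⟨e₀, e₁, e₂, h.symm⟩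
    · exact .inr ⟨q, hq, s, .inl h⟩
    · exact .inr ⟨q, hq, s, .inr ⟨j, hj.1, hj.2, h.symm⟩⟩
  · rintro (⟨e₀, e₁, e₂, h⟩ | ⟨q, hq, s, h | ⟨j, hj₁, hj₂, h⟩⟩)
    · exact .inl ⟨e₀, e₁, e₂, h.symm⟩
    · exact .inr ⟨q, s, hq, .inl h⟩
    · exact .inr ⟨q, s, hq, .inr ⟨j, ⟨hj₁, hj₂⟩, h.symm⟩⟩

/-- The path assignment after the root decision falsifying the literal `(v, s)` and `i` steps
of unit propagation along its chain. -/
def cascadeAssign (v : Var) (s : Bool) : ℕ → PAssign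
  | 0 => extendP (fun _ => none) v (!s)
  | i + 1 => extendP (cascadeAssign v s i) (chainVar v s (i + 1)) true

variable {v : ℕ} {s : Bool}

lemma cascadeAssign_of_lt_three {u : ℕ} (hu : u < 3) (i : ℕ) :
    cascadeAssign v s i u = if u = v then some (!s) else none := by
  induction i with
  | zero => rfl
  | succ i ih =>
    rw [cascadeAssign, extendP, if_neg (lt_chainVar hu v s (i + 1)).ne, ih]

lemma cascadeAssign_chainVar (hv : v < 3) {q : ℕ} (hq : q < 3) (s' : Bool) {j : ℕ}
    (hj : 1 ≤ j) (i : ℕ) :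
    cascadeAssign v s i (chainVar q s' j) = if q = v ∧ s' = s ∧ j ≤ i then some true else none := by
  induction i with
  | zero =>
    rw [cascadeAssign, extendP, if_neg (lt_chainVar hv q s' j).ne', if_neg (by omega)]
  | succ i ih =>
    rw [cascadeAssign, extendP]
    by_cases h : chainVar q s' j = chainVar v s (i + 1)
    · obtain ⟨rfl, rfl, rfl⟩ := (chainVar_inj hq hv).mp h
      simp
    · have hj' : q = v → s' = s → j ≠ i + 1 := by
        rintro rfl rfl rfl; exact h rfl
      rw [if_neg h, ih]
      congr 1
      apply propext
      constructor
      · rintro ⟨rfl, rfl, hle⟩; exact ⟨rfl, rfl, by omega⟩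
      · rintro ⟨rfl, rfl, hle⟩; exact ⟨rfl, rfl, by have := hj' rfl rfl; omega⟩

lemma cascadeAssign_chainVar_ne_false (hv : v < 3) {q : ℕ} (hq : q < 3) (s' : Bool) {j : ℕ}
    (hj : 1 ≤ j) (i : ℕ) : cascadeAssign v s i (chainVar q s' j) ≠ some (!true) := by
  rw [cascadeAssign_chainVar hv hq s' hj]
  split <;> simp

lemma unitClause_cascadeAssign_zero (hv : v < 3) :
    UnitClause (cascadeAssign v s 0) {(v, s), (chainVar v s 1, true)} (chainVar v s 1) true :=
  unitClause_pair (by simp [cascadeAssign_of_lt_three hv])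
    (by simp [cascadeAssign_chainVar hv hv])

lemma unitClause_cascadeAssign_of_pos (hv : v < 3) {i : ℕ} (hi : 1 ≤ i) :
    UnitClause (cascadeAssign v s i) {(chainVar v s i, false), (chainVar v s (i + 1), true)}
      (chainVar v s (i + 1)) true :=
  unitClause_pair (by simp [cascadeAssign_chainVar hv hv s hi])
    (by simp [cascadeAssign_chainVar hv hv s (Nat.le_succ_of_le hi)])

lemma quiet_cascadeAssign_signClause (hv : v < 3) (e₀ e₁ e₂ : Bool) (i : ℕ) :
    Quiet (cascadeAssign v s i) {(0, e₀), (1, e₁), (2, e₂)} := by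
  have hvar : ∀ {u}, u < 3 → u ≠ v → ∀ e, cascadeAssign v s i u ≠ some e := fun hu huv _ => by
    simp [cascadeAssign_of_lt_three hu, huv]
  obtain rfl | rfl | rfl : v = 0 ∨ v = 1 ∨ v = 2 := by omega
  · exact quiet_of_two_not_false (l₁ := (1, e₁)) (l₂ := (2, e₂)) (by simp) (by simp)
      (by simp) (hvar (by simp) (by simp) _) (hvar (by simp) (by simp) _)
  · exact quiet_of_two_not_false (l₁ := (0, e₀)) (l₂ := (2, e₂)) (by simp) (by simp)
      (by simp) (hvar (by simp) (by simp) _) (hvar (by simp) (by simp) _)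
  · exact quiet_of_two_not_false (l₁ := (0, e₀)) (l₂ := (1, e₁)) (by simp) (by simp)
      (by simp) (hvar (by simp) (by simp) _) (hvar (by simp) (by simp) _)

lemma quiet_or_unitClause_cascadeAssign (hv : v < 3) {k : ℕ} {C : Clause} (hC : C ∈ Fk k)
    (i : ℕ) : Quiet (cascadeAssign v s i) C ∨
      UnitClause (cascadeAssign v s i) C (chainVar v s (i + 1)) true := by
  rcases mem_Fk.mp hC with ⟨e₀, e₁, e₂, rfl⟩ | ⟨q, hq, s', rfl | ⟨j, hj, -, rfl⟩⟩
  · exact .inl (quiet_cascadeAssign_signClause hv e₀ e₁ e₂ i)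
  · by_cases hqs : q = v ∧ s' = s
    · obtain ⟨rfl, rfl⟩ := hqs
      rcases Nat.eq_zero_or_pos i with rfl | hi
      · exact .inr (unitClause_cascadeAssign_zero hv)
      · exact .inl (quiet_of_true_lit (l := (chainVar q s' 1, true)) (by simp)
          (by simp [cascadeAssign_chainVar hv hv s' le_rfl, hi.ne']))
    · refine .inl (quiet_of_two_not_false (l₁ := (q, s')) (l₂ := (chainVar q s' 1, true))
        (by simp) (by simp) (lt_chainVar hq q s' 1).ne ?_
        (cascadeAssign_chainVar_ne_false hv hq s' le_rfl i))
      rw [cascadeAssign_of_lt_three hq]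
      split_ifs with hqv
      · subst hqv
        simpa [eq_comm] using hqs
      · simp
  · by_cases hqs : q = v ∧ s' = s ∧ j ≤ i
    · obtain ⟨rfl, rfl, hji⟩ := hqs
      rcases hji.lt_or_eq with hlt | rfl
      · exact .inl (quiet_of_true_lit (l := (chainVar q s' (j + 1), true)) (by simp)
          (by simp [cascadeAssign_chainVar hv hv s' (Nat.le_succ_of_le hj), hlt]))
      · exact .inr (unitClause_cascadeAssign_of_pos hv hj)
    · refine .inl (quiet_of_two_not_false (l₁ := (chainVar q s' j, false))
        (l₂ := (chainVar q s' (j + 1), true)) (by simp) (by simp) ?_ ?_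
        (cascadeAssign_chainVar_ne_false hv hq s' (Nat.le_succ_of_le hj) i))
      · simp [chainVar_inj hq hq]
      · simp [cascadeAssign_chainVar hv hq s' hj, hqs]

lemma not_falsified_cascadeAssign (hv : v < 3) {k : ℕ} {C : Clause} (hC : C ∈ Fk k) (i : ℕ) :
    ¬ Falsified (cascadeAssign v s i) C :=
  (quiet_or_unitClause_cascadeAssign hv hC i).elim (·.1) (·.not_falsified)

lemma eq_chainVar_of_unitClause_cascadeAssign (hv : v < 3) {k : ℕ} {C : Clause}
    (hC : C ∈ Fk k) {i : ℕ} {w : Var} {b : Bool} (hu : UnitClause (cascadeAssign v s i) C w b) :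
    w = chainVar v s (i + 1) :=
  (quiet_or_unitClause_cascadeAssign hv hC i).elim (fun hq => absurd hu (hq.2 w b)) hu.unique

lemma exists_unitClause_cascadeAssign (hv : v < 3) {k i : ℕ} (hik : i < k) :
    ∃ C ∈ Fk k, UnitClause (cascadeAssign v s i) C (chainVar v s (i + 1)) true := by
  rcases Nat.eq_zero_or_pos i with rfl | hi
  · exact ⟨_, mem_Fk.mpr (.inr ⟨v, hv, s, .inl rfl⟩), unitClause_cascadeAssign_zero hv⟩
  · exact ⟨_, mem_Fk.mpr (.inr ⟨v, hv, s, .inr ⟨i, hi, by omega, rfl⟩⟩),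
      unitClause_cascadeAssign_of_pos hv hi⟩

lemma le_size_of_cascadeAssign (hv : v < 3) {k : ℕ} {t : DTree}
    (hD : DLLOk (Fk k) (cascadeAssign v s 0) t) (hB : BCPOk (Fk k) (cascadeAssign v s 0) t) :
    k ≤ t.size :=
  le_size_of_forced_chain (x := fun i => chainVar v s (i + 1)) (fun _ => rfl)
    (fun i _ _ hC => not_falsified_cascadeAssign hv hC i)
    (fun _ hik => let ⟨C, hC, hu⟩ := exists_unitClause_cascadeAssign hv hik; ⟨C, hC, true, hu⟩)
    (fun _ _ _ hC _ _ hu => eq_chainVar_of_unitClause_cascadeAssign hv hC hu) t 0 hD hB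

end Fk

theorem bcp_cascade_lower_bound_general (k : ℕ) (v : Var) (t0 t1 : DTree)
    (hv : v = 0 ∨ v = 1 ∨ v = 2)
    (ht : IsBCPRefutation (Fk k) (DTree.node v t0 t1)) :
    k ≤ t0.size ∧ k ≤ t1.size := by
  have hv3 : v < 3 := by rcases hv with rfl | rfl | rfl <;> norm_num
  obtain ⟨⟨-, hD0, hD1⟩, -, hB0, hB1⟩ := ht
  exact ⟨le_size_of_cascadeAssign (s := true) hv3 hD0 hB0,
    le_size_of_cascadeAssign (s := false) hv3 hD1 hB1⟩

/-- For every `k ≥ 1`, in any BCP-compliant decision-tree refutation of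
`F_k` whose root is labeled by one of the variables `a = 0`, `b = 1`, `c = 2`, each of
the two subtrees rooted at the children of the root has at least `k` internal nodes. -/
theorem bcp_cascade_lower_bound (k : ℕ) (hk : 1 ≤ k) (v : Var) (t0 t1 : DTree)
    (hv : v = 0 ∨ v = 1 ∨ v = 2)
    (ht : IsBCPRefutation (Fk k) (DTree.node v t0 t1)) :
    k ≤ t0.size ∧ k ≤ t1.size :=
  bcp_cascade_lower_bound_general k v t0 t1 hv ht
end
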